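/- arXiv:1808.03204 — 2 statements merged into one kernel-verified Lean document; each statement's English description precedes it below -/
import Mathlib

section
/- For all c ∈ ℝ and λ in the common domain, ψ_{G,c}(λ) = λ²/(2(1−cλ)) ≤ ψ_{E,3c/2}(λ) = (−log(1−(3c/2)λ) − (3c/2)λ)/(3c/2)²; i.e., sub-gamma with scale c implies sub-exponential with scale 3c/2. -/
/-- The sub-exponential function `ψ_{E,c} λ = (−log(1−cλ) − cλ)/c²`, with the
limiting value `ψ_{E,0} = λ²/2` at `c = 0`. -/
noncomputable def psiE (c l : ℝ) : ℝ :=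
  if c = 0 then l ^ 2 / 2 else (-Real.log (1 - c * l) - c * l) / c ^ 2

/-!
Both `ψ_{G,c}` and `ψ_{E,3c/2}` vanish at `0`, so it suffices to compare derivatives on `[0, λ]`.
These are `x(2 − cx)/(2(1 − cx)²)` and `x/(1 − 3cx/2)`, and after clearing denominators the
inequality between them reduces to `c²x²/2 ≥ 0`.
-/

lemma psiE_zero_right (c : ℝ) : psiE c 0 = 0 := by
  simp [psiE]

noncomputable def psiG (c l : ℝ) : ℝ := l ^ 2 / (2 * (1 - c * l))

lemma hasDerivAt_psiG {c x : ℝ} (hx : 1 - c * x ≠ 0) :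
    HasDerivAt (psiG c) (x * (2 - c * x) / (2 * (1 - c * x) ^ 2)) x := by
  have hlin : HasDerivAt (fun y => 2 * (1 - c * y)) (2 * -c) x := by
    simpa using (((hasDerivAt_id x).const_mul c).const_sub 1).const_mul 2
  refine ((hasDerivAt_pow 2 x).div hlin (by simpa using hx)).congr_deriv ?_
  field_simp
  ring

lemma hasDerivAt_psiE {c x : ℝ} (hx : 1 - c * x ≠ 0) :
    HasDerivAt (psiE c) (x / (1 - c * x)) x := by
  rcases eq_or_ne c 0 with rfl | hc
  · have h : psiE 0 = fun l => l ^ 2 / 2 := by ext; simp [psiE]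
    simpa [h] using (hasDerivAt_pow 2 x).div_const 2
  · have h : psiE c = fun l => (-Real.log (1 - c * l) - c * l) / c ^ 2 := by
      ext; simp [psiE, hc]
    have hlin : HasDerivAt (fun y => c * y) c x := by
      simpa using (hasDerivAt_id x).const_mul c
    rw [h]
    refine ((((hlin.const_sub 1).log hx).neg.sub hlin).div_const (c ^ 2)).congr_deriv ?_
    field_simp
    ring

lemma one_sub_mul_pos_of_mem_Icc {c l x : ℝ} (hx : x ∈ Set.Icc 0 l) (hl : c * l < 1) :
    0 < 1 - c * x := by
  rcases le_or_gt c 0 with hc | hc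
  · nlinarith [mul_nonpos_of_nonpos_of_nonneg hc hx.1]
  · nlinarith [mul_le_mul_of_nonneg_left hx.2 hc.le]

lemma deriv_psiG_le_deriv_psiE {c x : ℝ} (hx : 0 ≤ x) (hG : 0 < 1 - c * x)
    (hE : 0 < 1 - 3 * c / 2 * x) :
    x * (2 - c * x) / (2 * (1 - c * x) ^ 2) ≤ x / (1 - 3 * c / 2 * x) := by
  rw [div_le_div_iff₀ (by positivity) hE]
  have key : (2 - c * x) * (1 - 3 * c / 2 * x) + (c * x) ^ 2 / 2 = 2 * (1 - c * x) ^ 2 := by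
    ring
  nlinarith [mul_nonneg hx (sq_nonneg (c * x))]

/-- For every `c ∈ ℝ` and `λ ≥ 0` in the common domain of `ψ_{G,c}` and
`ψ_{E,3c/2}`: `ψ_{G,c} λ = λ²/(2(1−cλ)) ≤ ψ_{E,3c/2} λ`; i.e. sub-gamma with
scale `c` implies sub-exponential with scale `3c/2`. -/
theorem subGamma_le_subExponential (c l : ℝ) (hl0 : 0 ≤ l)
    (hG : c * l < 1) (hE : 3 * c / 2 * l < 1) :
    l ^ 2 / (2 * (1 - c * l)) ≤ psiE (3 * c / 2) l := by
  have hderiv : ∀ x ∈ Set.Icc 0 l, HasDerivAt (fun y => psiE (3 * c / 2) y - psiG c y)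
      (x / (1 - 3 * c / 2 * x) - x * (2 - c * x) / (2 * (1 - c * x) ^ 2)) x := fun x hx =>
    (hasDerivAt_psiE (one_sub_mul_pos_of_mem_Icc hx hE).ne').sub
      (hasDerivAt_psiG (one_sub_mul_pos_of_mem_Icc hx hG).ne')
  have hmono : MonotoneOn (fun y => psiE (3 * c / 2) y - psiG c y) (Set.Icc 0 l) := by
    refine monotoneOn_of_hasDerivWithinAt_nonneg (convex_Icc 0 l)
      (fun x hx => (hderiv x hx).continuousAt.continuousWithinAt)
      (fun x hx => (hderiv x (interior_subset hx)).hasDerivWithinAt) fun x hx => ?_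
    have hx := interior_subset hx
    exact sub_nonneg.mpr (deriv_psiG_le_deriv_psiE hx.1 (one_sub_mul_pos_of_mem_Icc hx hG)
      (one_sub_mul_pos_of_mem_Icc hx hE))
  have h := hmono (Set.left_mem_Icc.mpr hl0) (Set.right_mem_Icc.mpr hl0) hl0
  simpa [psiE_zero_right, psiG] using h
end

section
/- exp(x − (max(x,0))²/2) ≤ 1 + x + (max(−x,0))²/2 for all real x. As a step of the proof: e^{−x} + x − 1 ≤ x²/2 for all x ≥ 0. -/
/-!
For `x ≤ 0` the claim is `e^{-y} ≤ 1 - y + y²/2` with `y = -x ≥ 0`, which holds because the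
difference of the two sides vanishes at `0` and has derivative `e^{-y} + y - 1 ≥ 0`. For `x ≥ 0`
it is `e^{x - x²/2} ≤ 1 + x`, i.e. `1 ≤ (1 + x) e^{-x + x²/2}`, whose right side has derivative
`x² e^{-x + x²/2} ≥ 0`.
-/

open Real

theorem exp_neg_le_one_sub_add_sq_div_two {x : ℝ} (hx : 0 ≤ x) :
    exp (-x) ≤ 1 - x + x ^ 2 / 2 := by
  have hderiv (t : ℝ) :
      HasDerivAt (fun t ↦ 1 - t + t ^ 2 / 2 - exp (-t)) (exp (-t) + t - 1) t :=
    ((((hasDerivAt_const t 1).sub (hasDerivAt_id' t)).add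
      ((hasDerivAt_pow 2 t).div_const 2)).sub (hasDerivAt_neg' t).exp).congr_deriv (by ring)
  have hmono := monotone_of_hasDerivAt_nonneg hderiv fun t ↦
    sub_nonneg.2 (by linarith [add_one_le_exp (-t)])
  have h := hmono hx
  simp only [neg_zero, exp_zero] at h
  linarith

theorem exp_sub_sq_div_two_le_one_add {x : ℝ} (hx : 0 ≤ x) :
    exp (x - x ^ 2 / 2) ≤ 1 + x := by
  have hderiv (t : ℝ) : HasDerivAt (fun t ↦ (1 + t) * exp (-t + t ^ 2 / 2))
      (t ^ 2 * exp (-t + t ^ 2 / 2)) t :=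
    (((hasDerivAt_const t 1).add (hasDerivAt_id' t)).mul
      ((hasDerivAt_neg' t).add ((hasDerivAt_pow 2 t).div_const 2)).exp).congr_deriv
      (by simp only [Pi.add_apply]; ring)
  have hmono := monotone_of_hasDerivAt_nonneg hderiv fun t ↦ by positivity
  have h : 1 ≤ (1 + x) * exp (-x + x ^ 2 / 2) := by simpa using hmono hx
  calc exp (x - x ^ 2 / 2) = 1 / exp (-x + x ^ 2 / 2) := by rw [one_div, ← exp_neg]; ring_nf
    _ ≤ 1 + x := (div_le_iff₀ (exp_pos _)).2 h

/-- Delyon-type inequality underlying the 'SN II' condition: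
`exp(x − x₊²/2) ≤ 1 + x + x₋²/2` for all real `x` (where `x₊ = max(x,0)` and
`x₋ = max(−x,0)`); a step of the proof is `e^{−x} + x − 1 ≤ x²/2` for `x ≥ 0`. -/
theorem sn_two_inequality :
    (∀ x : ℝ, Real.exp (x - max x 0 ^ 2 / 2) ≤ 1 + x + max (-x) 0 ^ 2 / 2) ∧
    (∀ x : ℝ, 0 ≤ x → Real.exp (-x) + x - 1 ≤ x ^ 2 / 2) := by
  refine ⟨fun x ↦ ?_, fun x hx ↦ by linarith [exp_neg_le_one_sub_add_sq_div_two hx]⟩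
  rcases le_total 0 x with hx | hx
  · rw [max_eq_left hx, max_eq_right (neg_nonpos.2 hx)]
    linarith [exp_sub_sq_div_two_le_one_add hx]
  · rw [max_eq_right hx, max_eq_left (neg_nonneg.2 hx)]
    simpa [neg_sq, ← sub_eq_add_neg] using exp_neg_le_one_sub_add_sq_div_two (neg_nonneg.2 hx)
end
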